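/- arXiv:1502.00211 — 2 statements merged into one kernel-verified Lean document; each statement's English description precedes it below -/
import Mathlib

section
/- Let u : [0,∞) → [0,∞) be continuous and satisfy u(t) ≤ A + B ∫_0^t u(s) e^{−c(t−s)} ds for all t ≥ 0, where A, B, c > 0 are constants with B < c. Then u(t) ≤ A c/(c − B) for all t ≥ 0. -/
/-!
On `[0, t]` the continuous function `u` attains its maximum `m` at some `t₀`. Since the kernel
has total mass `∫_{-∞}^{t₀} e^{-c(t₀-s)} ds = 1/c`, the inequality at `t₀` gives
`m ≤ A + B m / c`, which rearranges to `m ≤ A c / (c - B)` because `B < c`.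
-/

open MeasureTheory Set Real

lemma exp_neg_mul_sub (c t s : ℝ) : exp (-c * (t - s)) = exp (-c * t) * exp (c * s) := by
  rw [← exp_add]; ring_nf

lemma integrableOn_Iic_exp_neg_mul_sub {c : ℝ} (hc : 0 < c) (t : ℝ) :
    IntegrableOn (fun s ↦ exp (-c * (t - s))) (Iic t) := by
  simp_rw [exp_neg_mul_sub]
  exact (integrableOn_exp_mul_Iic hc t).const_mul _

lemma integral_Iic_exp_neg_mul_sub {c : ℝ} (hc : 0 < c) (t : ℝ) :
    ∫ s in Iic t, exp (-c * (t - s)) = 1 / c := by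
  simp_rw [exp_neg_mul_sub]
  rw [integral_const_mul, integral_exp_mul_Iic hc, ← mul_div_assoc, ← exp_add, neg_mul,
    neg_add_cancel, exp_zero]

lemma setIntegral_Icc_exp_neg_mul_sub_le {c : ℝ} (hc : 0 < c) (a t : ℝ) :
    ∫ s in Icc a t, exp (-c * (t - s)) ≤ 1 / c := by
  rw [← integral_Iic_exp_neg_mul_sub hc t]
  exact setIntegral_mono_set (integrableOn_Iic_exp_neg_mul_sub hc t)
    (ae_of_all _ fun _ ↦ (exp_pos _).le) (Icc_subset_Iic_self.eventuallyLE)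

lemma setIntegral_Icc_mul_exp_neg_mul_sub_le {u : ℝ → ℝ} {c m t : ℝ} (hc : 0 < c) (ht : 0 ≤ t)
    (hu : ∀ s ∈ Icc 0 t, u s ∈ Icc 0 m) :
    ∫ s in Icc 0 t, u s * exp (-c * (t - s)) ≤ m / c := by
  have hm : 0 ≤ m := let h₀ := hu 0 ⟨le_rfl, ht⟩; h₀.1.trans h₀.2
  calc ∫ s in Icc 0 t, u s * exp (-c * (t - s))
      ≤ ∫ s in Icc 0 t, m * exp (-c * (t - s)) := by
        refine integral_mono_of_nonneg ?_ (Continuous.integrableOn_Icc (by fun_prop)) ?_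
        · exact ae_restrict_of_forall_mem measurableSet_Icc fun s hs ↦
            mul_nonneg (hu s hs).1 (exp_pos _).le
        · exact ae_restrict_of_forall_mem measurableSet_Icc fun s hs ↦
            mul_le_mul_of_nonneg_right (hu s hs).2 (exp_pos _).le
    _ = m * ∫ s in Icc 0 t, exp (-c * (t - s)) := integral_const_mul _ _
    _ ≤ m * (1 / c) := mul_le_mul_of_nonneg_left (setIntegral_Icc_exp_neg_mul_sub_le hc 0 t) hm
    _ = m / c := mul_one_div m c

lemma le_mul_div_sub_of_le_add_mul_div {A B c m : ℝ} (hc : 0 < c) (hBc : B < c)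
    (h : m ≤ A + B * (m / c)) : m ≤ A * c / (c - B) := by
  rw [le_div_iff₀ (sub_pos.2 hBc)]
  have : m * c ≤ A * c + B * m := by
    have := mul_le_mul_of_nonneg_right h hc.le
    rwa [add_mul, mul_assoc, div_mul_cancel₀ m hc.ne'] at this
  linarith

theorem gronwall_exponential_kernel_general (u : ℝ → ℝ) (A B c : ℝ)
    (hB : 0 < B) (hc : 0 < c) (hBc : B < c)
    (hucont : Continuous u) (hunonneg : ∀ t, 0 ≤ t → 0 ≤ u t)
    (hineq : ∀ t, 0 ≤ t →
      u t ≤ A + B * ∫ s in Set.Icc 0 t, u s * Real.exp (-c * (t - s))) :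
    ∀ t, 0 ≤ t → u t ≤ A * c / (c - B) := by
  intro t ht
  obtain ⟨t₀, ht₀, hmax⟩ :=
    isCompact_Icc.exists_isMaxOn (nonempty_Icc.2 ht) hucont.continuousOn
  have hbound : ∀ s ∈ Icc 0 t₀, u s ∈ Icc 0 (u t₀) := fun s hs ↦
    ⟨hunonneg s hs.1, hmax ⟨hs.1, hs.2.trans ht₀.2⟩⟩
  have hself : u t₀ ≤ A + B * (u t₀ / c) :=
    (hineq t₀ ht₀.1).trans (by
      gcongr
      exact setIntegral_Icc_mul_exp_neg_mul_sub_le hc ht₀.1 hbound)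
  exact (hmax ⟨ht, le_rfl⟩).trans (le_mul_div_sub_of_le_add_mul_div hc hBc hself)

/-- Grönwall-type inequality with exponentially decaying kernel: if u ≥ 0 is
continuous and u(t) ≤ A + B ∫₀ᵗ u(s) e^{−c(t−s)} ds with 0 < B < c, then
u(t) ≤ A c/(c−B) for all t ≥ 0. -/
theorem gronwall_exponential_kernel (u : ℝ → ℝ) (A B c : ℝ)
    (hA : 0 < A) (hB : 0 < B) (hc : 0 < c) (hBc : B < c)
    (hucont : Continuous u) (hunonneg : ∀ t, 0 ≤ t → 0 ≤ u t)
    (hineq : ∀ t, 0 ≤ t →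
      u t ≤ A + B * ∫ s in Set.Icc 0 t, u s * Real.exp (-c * (t - s))) :
    ∀ t, 0 ≤ t → u t ≤ A * c / (c - B) :=
  gronwall_exponential_kernel_general u A B c hB hc hBc hucont hunonneg hineq
end

section
/- Let Θ be a smooth solution on ℝ × (0,∞) of the nonlinear diffusion equation Θ_t = a (Θ_x/Θ)_x with a > 0, self-similar of the form Θ(x,t) = Θ(ξ) with ξ = x/√(1+t), taking values in [θ_−, θ_+] with 0 < θ_− ≤ θ_+. If Θ(±∞) = θ_± with θ_− < θ_+, then Θ is monotone increasing in ξ. -/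
/-- The self-similar profile Θ(ξ) of the nonlinear diffusion equation
Θ_t = a(Θ_x/Θ)_x, taking values in [θ₋, θ₊] with limits θ₋ at −∞ and θ₊ at +∞
(θ₋ < θ₊), is monotone increasing. -/
theorem diffusion_profile_monotone (Θ : ℝ → ℝ) (a θm θp : ℝ)
    (ha : 0 < a) (hθm : 0 < θm) (hθmp : θm < θp)
    (hsmooth : ContDiff ℝ (⊤ : ℕ∞) Θ)
    (hrange : ∀ ξ, Θ ξ ∈ Set.Icc θm θp)
    (hODE : ∀ ξ, -(ξ / 2) * deriv Θ ξ = a * deriv (fun η => deriv Θ η / Θ η) ξ)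
    (hbot : Filter.Tendsto Θ Filter.atBot (nhds θm))
    (htop : Filter.Tendsto Θ Filter.atTop (nhds θp)) :
    Monotone Θ := by
  have hΘpos : ∀ ξ, 0 < Θ ξ := fun ξ => lt_of_lt_of_le hθm (hrange ξ).1
  have hΘne : ∀ ξ, Θ ξ ≠ 0 := fun ξ => (hΘpos ξ).ne'
  have hΘdiff : Differentiable ℝ Θ := hsmooth.differentiable (by simp)
  have hΘ'diff : Differentiable ℝ (deriv Θ) :=
    (contDiff_infty_iff_deriv.mp (hsmooth.of_le (by simp))).2.differentiable (by simp)
  set v : ℝ → ℝ := fun ξ => a * (deriv Θ ξ / Θ ξ) with hv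
  have hqdiff : ∀ ξ, DifferentiableAt ℝ (fun η => deriv Θ η / Θ η) ξ :=
    fun ξ => (hΘ'diff ξ).div (hΘdiff ξ) (hΘne ξ)
  have hvdiff : Differentiable ℝ v :=
    fun ξ => (hqdiff ξ).const_mul a
  have hvderiv : ∀ ξ, deriv v ξ = -(ξ * Θ ξ / (2 * a)) * v ξ := by
    intro ξ
    have h1 : deriv v ξ = a * deriv (fun η => deriv Θ η / Θ η) ξ := by
      rw [hv]; exact deriv_const_mul a (hqdiff ξ)
    rw [h1, ← hODE ξ, hv]
    field_simp [hΘne ξ, ha.ne']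
  set c : ℝ → ℝ := fun η => η * Θ η / (2 * a) with hc
  have hccont : Continuous c := by
    exact (continuous_id.mul hsmooth.continuous).div_const _
  set F : ℝ → ℝ := fun ξ => ∫ η in (0:ℝ)..ξ, c η with hF
  have hFd : ∀ ξ, HasDerivAt F (c ξ) ξ := by
    intro ξ
    exact intervalIntegral.integral_hasDerivAt_right
      (hccont.intervalIntegrable 0 ξ)
      (hccont.stronglyMeasurableAtFilter _ _)
      hccont.continuousAt
  have hw : ∀ ξ, HasDerivAt (fun ξ => v ξ * Real.exp (F ξ)) 0 ξ := by
    intro ξ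
    have hve : HasDerivAt v (deriv v ξ) ξ := (hvdiff ξ).hasDerivAt
    have he : HasDerivAt (fun ξ => Real.exp (F ξ)) (Real.exp (F ξ) * c ξ) ξ :=
      (hFd ξ).exp
    have hmul := hve.mul he
    have h0 : deriv v ξ * Real.exp (F ξ) + v ξ * (Real.exp (F ξ) * c ξ) = 0 := by
      rw [hvderiv ξ]; simp only [hc]; ring
    rwa [h0] at hmul
  have hconst : ∀ ξ, v ξ * Real.exp (F ξ) = v 0 := by
    intro ξ
    have := is_const_of_deriv_eq_zero
      (f := fun ξ => v ξ * Real.exp (F ξ))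
      (fun x => (hw x).differentiableAt) (fun x => (hw x).deriv) ξ 0
    simpa [hF, intervalIntegral.integral_same] using this
  have hderivΘ : ∀ ξ, deriv Θ ξ = v ξ * Θ ξ / a := by
    intro ξ
    rw [hv]
    field_simp [hΘne ξ, ha.ne']
  rcases le_or_gt 0 (v 0) with h0 | h0
  · -- v ≥ 0 everywhere, so deriv Θ ≥ 0, Θ monotone
    have hvnn : ∀ ξ, 0 ≤ v ξ := by
      intro ξ
      have h := hconst ξ
      nlinarith [Real.exp_pos (F ξ)]
    refine monotone_of_deriv_nonneg hΘdiff ?_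
    intro ξ
    rw [hderivΘ ξ]
    exact div_nonneg (mul_nonneg (hvnn ξ) (hΘpos ξ).le) ha.le
  · -- v < 0 everywhere, so Θ antitone, contradicting the limits
    exfalso
    have hvneg : ∀ ξ, v ξ < 0 := by
      intro ξ
      have h := hconst ξ
      nlinarith [Real.exp_pos (F ξ)]
    have hanti : Antitone Θ := by
      refine antitone_of_deriv_nonpos hΘdiff ?_
      intro ξ
      rw [hderivΘ ξ]
      have h1 := hvneg ξ
      have h2 := hΘpos ξ
      have : v ξ * Θ ξ < 0 := mul_neg_of_neg_of_pos h1 h2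
      exact le_of_lt (div_neg_of_neg_of_pos this ha)
    have h1 : Θ 0 ≤ θm :=
      ge_of_tendsto hbot ((Filter.eventually_le_atBot (0:ℝ)).mono fun x hx => hanti hx)
    have h2 : θp ≤ Θ 0 :=
      le_of_tendsto htop ((Filter.eventually_ge_atTop (0:ℝ)).mono fun x hx => hanti hx)
    linarith
end
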